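/- Let k be an algebraically closed field and A a finite-dimensional k-algebra. Then the map sending a Calabi–Yau family of traces (t_P) on all finitely generated projective right A-modules to the family of its components at the indecomposable finitely generated projective right A-modules is a bijection onto the set of families (T_P), indexed by the indecomposable finitely generated projective right A-modules P, of k-linear maps T_P : End_A(P) → k such that for all indecomposable finitely generated projectives P, Q the pairing Hom_A(P,Q) × Hom_A(Q,P) → k, (f,g) ↦ T_Q(f ∘ g), is nondegenerate and symmetric in the sense that T_Q(f ∘ g) = T_P(g ∘ f). -/

import Mathlib

/-!
Over a finite-dimensional algebra every finitely generated projective module `P` is a finite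
biproduct `⊕ Pᵢ` of indecomposables, with inclusions `ιᵢ` and projections `πᵢ` (split off a
complemented summand and induct on the `k`-dimension). Writing `f = ∑ᵢ (f ιᵢ) πᵢ`, cyclicity forces
`t_P(f) = ∑ᵢ t_{Pᵢ}(πᵢ f ιᵢ)`; this gives uniqueness and dictates the extension of a family on
indecomposables. Inserting `∑ⱼ ιⱼ πⱼ = id` between `g` and `f` turns cyclicity of the extension
into the symmetry of the given family, and shows that the extension does not depend on the chosen
decomposition. For nondegeneracy, a nonzero `f : P → Q` has a nonzero block `πⱼ f ιᵢ` between
indecomposable summands, and cyclicity moves the pairing onto that block.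
-/

universe u

/-- A bundled finitely generated projective right `A`-module (with compatible `k`-action). -/
structure FGProj (k A : Type u) [Field k] [Ring A] [Algebra k A] : Type (u + 1) where
  carrier : Type u
  [isAddCommGroup : AddCommGroup carrier]
  [isModuleK : Module k carrier]
  [isModuleA : Module Aᵐᵒᵖ carrier]
  [isTower : IsScalarTower k Aᵐᵒᵖ carrier]
  [isFinite : Module.Finite Aᵐᵒᵖ carrier]
  [isProjective : Module.Projective Aᵐᵒᵖ carrier]

attribute [instance] FGProj.isAddCommGroup FGProj.isModuleK FGProj.isModuleA
  FGProj.isTower FGProj.isFinite FGProj.isProjective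

instance (k A : Type u) [Field k] [Ring A] [Algebra k A] : CoeSort (FGProj k A) (Type u) :=
  ⟨FGProj.carrier⟩

/-- A Calabi–Yau family of traces on the finitely generated projective right `A`-modules. -/
structure CYTraces (k A : Type u) [Field k] [Ring A] [Algebra k A] : Type (u + 1) where
  t : ∀ P : FGProj k A, ((P : Type u) →ₗ[Aᵐᵒᵖ] P) →ₗ[k] k
  cyclic : ∀ (P Q : FGProj k A) (f : (P : Type u) →ₗ[Aᵐᵒᵖ] Q) (g : (Q : Type u) →ₗ[Aᵐᵒᵖ] P),
    t P (g ∘ₗ f) = t Q (f ∘ₗ g)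
  nondeg_left : ∀ (P Q : FGProj k A) (f : (P : Type u) →ₗ[Aᵐᵒᵖ] Q), f ≠ 0 →
    ∃ g : (Q : Type u) →ₗ[Aᵐᵒᵖ] P, t Q (f ∘ₗ g) ≠ 0
  nondeg_right : ∀ (P Q : FGProj k A) (g : (Q : Type u) →ₗ[Aᵐᵒᵖ] P), g ≠ 0 →
    ∃ f : (P : Type u) →ₗ[Aᵐᵒᵖ] Q, t Q (f ∘ₗ g) ≠ 0

/-- A module is indecomposable if it is nonzero and is not an (internal) direct sum of two
nonzero submodules. -/
def IsIndecomposable (A : Type u) [Ring A] (M : Type u) [AddCommGroup M]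
    [Module Aᵐᵒᵖ M] : Prop :=
  Nontrivial M ∧ ¬ ∃ N N' : Submodule Aᵐᵒᵖ M, N ≠ ⊥ ∧ N' ≠ ⊥ ∧ IsCompl N N'

/-- A family of traces indexed by the indecomposable f.g. projective right `A`-modules. -/
def IndecFamily (k A : Type u) [Field k] [Ring A] [Algebra k A] : Type (u + 1) :=
  ∀ P : FGProj k A, IsIndecomposable A P → (((P : Type u) →ₗ[Aᵐᵒᵖ] P) →ₗ[k] k)

/-- The condition on a family of traces on indecomposable f.g. projectives: the induced
pairings are nondegenerate and symmetric. -/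
def IsGoodIndecFamily (k A : Type u) [Field k] [Ring A] [Algebra k A]
    (T : IndecFamily k A) : Prop :=
  (∀ (P Q : FGProj k A) (hP : IsIndecomposable A P) (hQ : IsIndecomposable A Q)
      (f : (P : Type u) →ₗ[Aᵐᵒᵖ] Q) (g : (Q : Type u) →ₗ[Aᵐᵒᵖ] P),
      T Q hQ (f ∘ₗ g) = T P hP (g ∘ₗ f)) ∧
  (∀ (P Q : FGProj k A) (hP : IsIndecomposable A P) (hQ : IsIndecomposable A Q)
      (f : (P : Type u) →ₗ[Aᵐᵒᵖ] Q), f ≠ 0 →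
      ∃ g : (Q : Type u) →ₗ[Aᵐᵒᵖ] P, T Q hQ (f ∘ₗ g) ≠ 0) ∧
  (∀ (P Q : FGProj k A) (hP : IsIndecomposable A P) (hQ : IsIndecomposable A Q)
      (g : (Q : Type u) →ₗ[Aᵐᵒᵖ] P), g ≠ 0 →
      ∃ f : (P : Type u) →ₗ[Aᵐᵒᵖ] Q, T Q hQ (f ∘ₗ g) ≠ 0)

section

variable {k A : Type u} [Field k] [Ring A] [Algebra k A]

instance [FiniteDimensional k A] : Module.Finite k Aᵐᵒᵖ :=
  Module.Finite.equiv (MulOpposite.opLinearEquiv k)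

instance [FiniteDimensional k A] (P : FGProj k A) : Module.Finite k P :=
  Module.Finite.trans Aᵐᵒᵖ (P : Type u)

abbrev FGProj.ofIsCompl (P : FGProj k A) {N N' : Submodule Aᵐᵒᵖ P} (h : IsCompl N N') :
    FGProj k A where
  carrier := N
  isFinite := Module.Finite.of_surjective _ (N.projectionOnto_surjective h)
  isProjective := .of_split N.subtype _ (N.projectionOnto_comp_subtype h)

theorem FGProj.finrank_ofIsCompl_lt [FiniteDimensional k A] (P : FGProj k A)
    {N N' : Submodule Aᵐᵒᵖ P} (h : IsCompl N N') (hN' : N' ≠ ⊥) :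
    Module.finrank k (P.ofIsCompl h) < Module.finrank k P := by
  have hNtop : N.restrictScalars k ≠ ⊤ := by
    rw [Ne, Submodule.restrictScalars_eq_top_iff]
    rintro rfl
    exact hN' (eq_bot_of_isCompl_top h.symm)
  exact Submodule.finrank_lt hNtop

structure IndecDecomp (P : FGProj k A) : Type (u + 1) where
  ι : Type
  [fintype : Fintype ι]
  Q : ι → FGProj k A
  indec : ∀ i, IsIndecomposable A (Q i)
  inc : ∀ i, (Q i : Type u) →ₗ[Aᵐᵒᵖ] P
  prj : ∀ i, (P : Type u) →ₗ[Aᵐᵒᵖ] Q i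
  prj_comp_inc_self : ∀ i, prj i ∘ₗ inc i = LinearMap.id
  prj_comp_inc_of_ne : ∀ i j, i ≠ j → prj i ∘ₗ inc j = 0
  sum_inc_comp_prj : ∑ i, inc i ∘ₗ prj i = LinearMap.id

attribute [instance] IndecDecomp.fintype

namespace IndecDecomp

variable {P : FGProj k A}

theorem sum_inc_prj (D : IndecDecomp P) (x : P) : ∑ i, D.inc i (D.prj i x) = x := by
  simpa using LinearMap.congr_fun D.sum_inc_comp_prj x

theorem comp_eq_sum {M N : Type*} [AddCommGroup M] [Module Aᵐᵒᵖ M] [AddCommGroup N]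
    [Module Aᵐᵒᵖ N] (D : IndecDecomp P) (f : (P : Type u) →ₗ[Aᵐᵒᵖ] M) (g : N →ₗ[Aᵐᵒᵖ] P) :
    f ∘ₗ g = ∑ i, (f ∘ₗ D.inc i) ∘ₗ (D.prj i ∘ₗ g) := by
  ext x
  conv_lhs => rw [LinearMap.comp_apply, ← D.sum_inc_prj (g x)]
  simp

def empty (P : FGProj k A) [Subsingleton P] : IndecDecomp P where
  ι := Empty
  Q := Empty.elim
  indec := (·.elim)
  inc := (·.elim)
  prj := (·.elim)
  prj_comp_inc_self := (·.elim)
  prj_comp_inc_of_ne := (·.elim)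
  sum_inc_comp_prj := Subsingleton.elim _ _

def single (P : FGProj k A) (hP : IsIndecomposable A P) : IndecDecomp P where
  ι := Unit
  Q _ := P
  indec _ := hP
  inc _ := LinearMap.id
  prj _ := LinearMap.id
  prj_comp_inc_self _ := rfl
  prj_comp_inc_of_ne _ _ h := absurd rfl h
  sum_inc_comp_prj := by simp

noncomputable def ofIsCompl {N N' : Submodule Aᵐᵒᵖ P} (h : IsCompl N N')
    (D : IndecDecomp (P.ofIsCompl h)) (D' : IndecDecomp (P.ofIsCompl h.symm)) :
    IndecDecomp P where
  ι := D.ι ⊕ D'.ι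
  Q := Sum.elim D.Q D'.Q
  indec := Sum.rec D.indec D'.indec
  inc := Sum.rec (fun i => N.subtype ∘ₗ D.inc i) (fun i => N'.subtype ∘ₗ D'.inc i)
  prj := Sum.rec (fun i => D.prj i ∘ₗ N.projectionOnto N' h)
    (fun i => D'.prj i ∘ₗ N'.projectionOnto N h.symm)
  prj_comp_inc_self := by
    rintro (i | i)
    · change D.prj i ∘ₗ (N.projectionOnto N' h ∘ₗ N.subtype) ∘ₗ D.inc i = LinearMap.id
      rw [N.projectionOnto_comp_subtype, LinearMap.id_comp, D.prj_comp_inc_self]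
    · change D'.prj i ∘ₗ (N'.projectionOnto N h.symm ∘ₗ N'.subtype) ∘ₗ D'.inc i = LinearMap.id
      rw [N'.projectionOnto_comp_subtype, LinearMap.id_comp, D'.prj_comp_inc_self]
  prj_comp_inc_of_ne := by
    have hN : N.projectionOnto N' h ∘ₗ N'.subtype = 0 :=
      LinearMap.ext (N.projectionOnto_apply_right h)
    have hN' : N'.projectionOnto N h.symm ∘ₗ N.subtype = 0 :=
      LinearMap.ext (N'.projectionOnto_apply_right h.symm)
    rintro (i | i) (j | j) hij
    · change D.prj i ∘ₗ (N.projectionOnto N' h ∘ₗ N.subtype) ∘ₗ D.inc j = 0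
      rw [N.projectionOnto_comp_subtype, LinearMap.id_comp,
        D.prj_comp_inc_of_ne i j (by simpa using hij)]
    · change D.prj i ∘ₗ (N.projectionOnto N' h ∘ₗ N'.subtype) ∘ₗ D'.inc j = 0
      rw [hN, LinearMap.zero_comp, LinearMap.comp_zero]
    · change D'.prj i ∘ₗ (N'.projectionOnto N h.symm ∘ₗ N.subtype) ∘ₗ D.inc j = 0
      rw [hN', LinearMap.zero_comp, LinearMap.comp_zero]
    · change D'.prj i ∘ₗ (N'.projectionOnto N h.symm ∘ₗ N'.subtype) ∘ₗ D'.inc j = 0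
      rw [N'.projectionOnto_comp_subtype, LinearMap.id_comp,
        D'.prj_comp_inc_of_ne i j (by simpa using hij)]
  sum_inc_comp_prj := by
    rw [Fintype.sum_sum_type]
    refine LinearMap.ext fun x => ?_
    simp only [LinearMap.add_apply, LinearMap.coe_sum, Finset.sum_apply]
    change ∑ i, N.subtype (D.inc i (D.prj i (N.projectionOnto N' h x))) +
      ∑ i, N'.subtype (D'.inc i (D'.prj i (N'.projectionOnto N h.symm x))) = x
    rw [← map_sum, ← map_sum, D.sum_inc_prj, D'.sum_inc_prj]
    exact N.projection_add_projection_eq_self h x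

theorem nonempty [FiniteDimensional k A] (P : FGProj k A) : Nonempty (IndecDecomp P) := by
  induction hn : Module.finrank k P using Nat.strong_induction_on generalizing P with
  | _ n ih =>
  rcases subsingleton_or_nontrivial P with hP | hP
  · exact ⟨empty P⟩
  by_cases hind : IsIndecomposable A P
  · exact ⟨single P hind⟩
  obtain ⟨N, N', hN, hN', h⟩ : ∃ N N' : Submodule Aᵐᵒᵖ P, N ≠ ⊥ ∧ N' ≠ ⊥ ∧ IsCompl N N' :=
    by_contra fun hsplit => hind ⟨hP, hsplit⟩
  obtain ⟨D⟩ := ih _ (hn ▸ P.finrank_ofIsCompl_lt h hN') _ rfl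
  obtain ⟨D'⟩ := ih _ (hn ▸ P.finrank_ofIsCompl_lt h.symm hN) _ rfl
  exact ⟨ofIsCompl h D D'⟩

theorem exists_prj_comp_inc_ne_zero {Q : FGProj k A} (D : IndecDecomp P) (E : IndecDecomp Q)
    {f : (P : Type u) →ₗ[Aᵐᵒᵖ] Q} (hf : f ≠ 0) :
    ∃ i j, E.prj j ∘ₗ f ∘ₗ D.inc i ≠ 0 := by
  by_contra! hblock
  refine hf ?_
  rw [← LinearMap.id_comp f, E.comp_eq_sum]
  refine Finset.sum_eq_zero fun j _ => ?_
  rw [LinearMap.id_comp, ← LinearMap.comp_id (E.prj j ∘ₗ f), D.comp_eq_sum]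
  simp [LinearMap.comp_assoc, hblock]

end IndecDecomp

abbrev TraceFamily (k A : Type u) [Field k] [Ring A] [Algebra k A] : Type (u + 1) :=
  ∀ P : FGProj k A, ((P : Type u) →ₗ[Aᵐᵒᵖ] P) →ₗ[k] k

def TraceFamily.IsCyclic (t : TraceFamily k A) : Prop :=
  ∀ (P Q : FGProj k A) (f : (P : Type u) →ₗ[Aᵐᵒᵖ] Q) (g : (Q : Type u) →ₗ[Aᵐᵒᵖ] P),
    t P (g ∘ₗ f) = t Q (f ∘ₗ g)

def TraceFamily.restrict (t : TraceFamily k A) : IndecFamily k A := fun P _ => t P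

def IndecFamily.IsSymmetric (T : IndecFamily k A) : Prop :=
  ∀ (P Q : FGProj k A) (hP : IsIndecomposable A P) (hQ : IsIndecomposable A Q)
    (f : (P : Type u) →ₗ[Aᵐᵒᵖ] Q) (g : (Q : Type u) →ₗ[Aᵐᵒᵖ] P),
    T Q hQ (f ∘ₗ g) = T P hP (g ∘ₗ f)

def IndecFamily.NondegLeft (T : IndecFamily k A) : Prop :=
  ∀ (P Q : FGProj k A) (_ : IsIndecomposable A P) (hQ : IsIndecomposable A Q)
    (f : (P : Type u) →ₗ[Aᵐᵒᵖ] Q), f ≠ 0 → ∃ g : (Q : Type u) →ₗ[Aᵐᵒᵖ] P, T Q hQ (f ∘ₗ g) ≠ 0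

namespace IndecDecomp

variable {P Q : FGProj k A} {T : IndecFamily k A}

def trace (D : IndecDecomp P) (T : IndecFamily k A) : ((P : Type u) →ₗ[Aᵐᵒᵖ] P) →ₗ[k] k where
  toFun f := ∑ i, T (D.Q i) (D.indec i) (D.prj i ∘ₗ f ∘ₗ D.inc i)
  map_add' f g := by simp [LinearMap.add_comp, LinearMap.comp_add, Finset.sum_add_distrib]
  map_smul' c f := by simp [LinearMap.smul_comp, LinearMap.comp_smul, Finset.mul_sum]

theorem trace_apply (D : IndecDecomp P) (f : (P : Type u) →ₗ[Aᵐᵒᵖ] P) :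
    D.trace T f = ∑ i, T (D.Q i) (D.indec i) (D.prj i ∘ₗ f ∘ₗ D.inc i) :=
  rfl

theorem trace_comp_comm (hT : T.IsSymmetric) (D : IndecDecomp P) (E : IndecDecomp Q)
    (f : (P : Type u) →ₗ[Aᵐᵒᵖ] Q) (g : (Q : Type u) →ₗ[Aᵐᵒᵖ] P) :
    D.trace T (g ∘ₗ f) = E.trace T (f ∘ₗ g) := by
  have hD : ∀ i, D.prj i ∘ₗ (g ∘ₗ f) ∘ₗ D.inc i =
      ∑ j, (D.prj i ∘ₗ g ∘ₗ E.inc j) ∘ₗ (E.prj j ∘ₗ f ∘ₗ D.inc i) :=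
    fun i => E.comp_eq_sum (D.prj i ∘ₗ g) (f ∘ₗ D.inc i)
  have hE : ∀ j, E.prj j ∘ₗ (f ∘ₗ g) ∘ₗ E.inc j =
      ∑ i, (E.prj j ∘ₗ f ∘ₗ D.inc i) ∘ₗ (D.prj i ∘ₗ g ∘ₗ E.inc j) :=
    fun j => D.comp_eq_sum (E.prj j ∘ₗ f) (g ∘ₗ E.inc j)
  simp only [trace_apply, hD, hE, map_sum]
  rw [Finset.sum_comm]
  exact Finset.sum_congr rfl fun j _ => Finset.sum_congr rfl fun i _ => hT _ _ _ _ _ _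

theorem trace_eq_trace (hT : T.IsSymmetric) (D E : IndecDecomp P) : D.trace T = E.trace T :=
  LinearMap.ext fun f => D.trace_comp_comm hT E f LinearMap.id

@[simp]
theorem trace_single (hP : IsIndecomposable A P) : (single P hP).trace T = T P hP :=
  LinearMap.ext fun f => by simp [trace_apply, single]

end IndecDecomp

namespace TraceFamily.IsCyclic

variable {t : TraceFamily k A}

theorem eq_trace (ht : t.IsCyclic) {P : FGProj k A} (D : IndecDecomp P) :
    t P = D.trace t.restrict := by
  refine LinearMap.ext fun f => ?_
  conv_lhs => rw [← LinearMap.comp_id f, D.comp_eq_sum, map_sum]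
  exact Finset.sum_congr rfl fun i _ => ht P (D.Q i) (D.prj i) (f ∘ₗ D.inc i)

variable [FiniteDimensional k A]

theorem eq_of_restrict_eq (ht : t.IsCyclic) {t' : TraceFamily k A} (ht' : t'.IsCyclic)
    (h : t.restrict = t'.restrict) : t = t' := by
  funext P
  obtain ⟨D⟩ := IndecDecomp.nonempty P
  rw [ht.eq_trace D, ht'.eq_trace D, h]

theorem nondeg_left (ht : t.IsCyclic) (hnd : t.restrict.NondegLeft) {P Q : FGProj k A}
    {f : (P : Type u) →ₗ[Aᵐᵒᵖ] Q} (hf : f ≠ 0) : ∃ g, t Q (f ∘ₗ g) ≠ 0 := by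
  obtain ⟨D⟩ := IndecDecomp.nonempty P
  obtain ⟨E⟩ := IndecDecomp.nonempty Q
  obtain ⟨i, j, hij⟩ := D.exists_prj_comp_inc_ne_zero E hf
  obtain ⟨g, hg⟩ := hnd _ _ (D.indec i) (E.indec j) _ hij
  refine ⟨D.inc i ∘ₗ g ∘ₗ E.prj j, ?_⟩
  rwa [← LinearMap.comp_assoc, ← LinearMap.comp_assoc, ht]

theorem nondeg_right (ht : t.IsCyclic) (hnd : t.restrict.NondegLeft) {P Q : FGProj k A}
    {g : (Q : Type u) →ₗ[Aᵐᵒᵖ] P} (hg : g ≠ 0) : ∃ f, t Q (f ∘ₗ g) ≠ 0 := by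
  obtain ⟨f, hf⟩ := ht.nondeg_left hnd hg
  exact ⟨f, (ht Q P g f).trans_ne hf⟩

end TraceFamily.IsCyclic

namespace IndecFamily

variable [FiniteDimensional k A] {T : IndecFamily k A}

noncomputable def extend (T : IndecFamily k A) : TraceFamily k A :=
  fun P => (IndecDecomp.nonempty P).some.trace T

theorem IsSymmetric.isCyclic_extend (hT : T.IsSymmetric) : T.extend.IsCyclic :=
  fun _ _ f g => IndecDecomp.trace_comp_comm hT _ _ f g

theorem IsSymmetric.restrict_extend (hT : T.IsSymmetric) : T.extend.restrict = T := by
  funext P hP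
  exact (IndecDecomp.trace_eq_trace hT _ _).trans (IndecDecomp.trace_single hP)

noncomputable def toCYTraces (T : IndecFamily k A) (hT : IsGoodIndecFamily k A T) :
    CYTraces k A :=
  have hsymm : T.IsSymmetric := hT.1
  have hnd : T.extend.restrict.NondegLeft := by rw [hsymm.restrict_extend]; exact hT.2.1
  { t := T.extend
    cyclic := hsymm.isCyclic_extend
    nondeg_left _ _ _ := hsymm.isCyclic_extend.nondeg_left hnd
    nondeg_right _ _ _ := hsymm.isCyclic_extend.nondeg_right hnd }

end IndecFamily

theorem CYTraces.ext {t t' : CYTraces k A} (h : t.t = t'.t) : t = t' := by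
  cases t; cases t'; cases h; rfl

theorem CYTraces.isGoodIndecFamily_restrict (t : CYTraces k A) :
    IsGoodIndecFamily k A (TraceFamily.restrict t.t) :=
  ⟨fun P Q _ _ f g => (t.cyclic P Q f g).symm, fun P Q _ _ => t.nondeg_left P Q,
    fun P Q _ _ => t.nondeg_right P Q⟩

end

theorem cy_traces_restriction_to_indecomposables_bijective_general
    (k A : Type u) [Field k] [Ring A] [Algebra k A] [FiniteDimensional k A] :
    (∀ t : CYTraces k A,
      IsGoodIndecFamily k A (fun (P : FGProj k A) (_ : IsIndecomposable A ↑P) => t.t P)) ∧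
    (∀ T : IndecFamily k A, IsGoodIndecFamily k A T →
      ∃! t : CYTraces k A, (fun (P : FGProj k A) (_ : IsIndecomposable A ↑P) => t.t P) = T) := by
  refine ⟨CYTraces.isGoodIndecFamily_restrict, fun T hT => ?_⟩
  have hsymm : T.IsSymmetric := hT.1
  refine ⟨T.toCYTraces hT, hsymm.restrict_extend, fun t ht => CYTraces.ext ?_⟩
  exact TraceFamily.IsCyclic.eq_of_restrict_eq t.cyclic hsymm.isCyclic_extend
    (ht.trans hsymm.restrict_extend.symm)

/-- Restriction of a Calabi–Yau family of traces to the indecomposable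
f.g. projective right `A`-modules is a bijection onto the set of families of traces on
indecomposables with symmetric nondegenerate pairings: every restriction is such a family,
and every such family lifts uniquely to a Calabi–Yau family. -/
theorem cy_traces_restriction_to_indecomposables_bijective
    (k A : Type u) [Field k] [IsAlgClosed k] [Ring A] [Algebra k A] [FiniteDimensional k A] :
    (∀ t : CYTraces k A,
      IsGoodIndecFamily k A (fun (P : FGProj k A) (_ : IsIndecomposable A ↑P) => t.t P)) ∧
    (∀ T : IndecFamily k A, IsGoodIndecFamily k A T →
      ∃! t : CYTraces k A, (fun (P : FGProj k A) (_ : IsIndecomposable A ↑P) => t.t P) = T) :=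
  cy_traces_restriction_to_indecomposables_bijective_general k A
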